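/- arXiv:2204.01074 — 3 statements merged into one kernel-verified Lean document; each statement's English description precedes it below -/
import Mathlib

section
/- Let G be a multigraph with χ'(G) = k and let H be a k-dense subgraph of G. Then for every k-edge-coloring φ of G, the subgraph H is φ_H-elementary and strongly φ-closed, where φ_H is the restriction of φ to E(H). -/
/-- A finite multigraph: finite vertex and edge types, each edge has an unordered pair of
endvertices, and there are no loops. -/
structure Multigraph where
  V : Type
  E : Type
  [fintypeV : Fintype V]
  [fintypeE : Fintype E]
  ends : E → Sym2 V
  loopless : ∀ e, ¬ (ends e).IsDiag

attribute [instance] Multigraph.fintypeV Multigraph.fintypeE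

namespace Multigraph

section Basic

variable (G : Multigraph)

/-- The degree of a vertex: the number of edges incident with it. -/
noncomputable def degree (v : G.V) : ℕ := {e : G.E | v ∈ G.ends e}.ncard

/-- The maximum degree Δ(G). -/
noncomputable def maxDegree : ℕ := sSup (Set.range G.degree)

/-- The number of edges joining `x` and `y` (the multiplicity e_G(x,y)). -/
noncomputable def mult (x y : G.V) : ℕ := {e : G.E | G.ends e = s(x, y)}.ncard

/-- The maximum multiplicity μ(G). -/
noncomputable def maxMult : ℕ := sSup {m : ℕ | ∃ x y : G.V, G.mult x y = m}

/-- `c` is a proper edge coloring, with palette `{1,…,k}`, of the edges in `D`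
(edges sharing an endvertex get distinct colors). -/
def IsProperColoringOn (k : ℕ) (D : Set G.E) (c : G.E → ℕ) : Prop :=
  (∀ e ∈ D, c e ∈ Set.Icc 1 k) ∧
  ∀ e ∈ D, ∀ f ∈ D, e ≠ f → (∃ v, v ∈ G.ends e ∧ v ∈ G.ends f) → c e ≠ c f

/-- A proper `k`-edge-coloring of all of `G`. -/
def IsProperColoring (k : ℕ) (c : G.E → ℕ) : Prop := G.IsProperColoringOn k Set.univ c

/-- The chromatic index of the subgraph of `G` consisting of the edges in `D`
(vertices are irrelevant for edge colorings). -/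
noncomputable def chromIndexOn (D : Set G.E) : ℕ := sInf {k | ∃ c, G.IsProperColoringOn k D c}

/-- The chromatic index χ'(G). -/
noncomputable def chromIndex : ℕ := G.chromIndexOn Set.univ

/-- The set of colors of the palette `{1,…,k}` missing at `v`, where only the edges in `D`
are regarded as colored. -/
def missingOn (k : ℕ) (D : Set G.E) (c : G.E → ℕ) (v : G.V) : Set ℕ :=
  {i | i ∈ Set.Icc 1 k ∧ ∀ e ∈ D, v ∈ G.ends e → c e ≠ i}

/-- `X` is elementary: missing-color sets of distinct vertices of `X` are disjoint. -/
def IsElementaryOn (k : ℕ) (D : Set G.E) (c : G.E → ℕ) (X : Set G.V) : Prop :=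
  ∀ u ∈ X, ∀ v ∈ X, u ≠ v → G.missingOn k D c u ∩ G.missingOn k D c v = ∅

/-- The boundary ∂_G(X): edges with an endvertex in `X` and an endvertex outside `X`. -/
def boundary (X : Set G.V) : Set G.E :=
  {e | (∃ v ∈ G.ends e, v ∈ X) ∧ (∃ v ∈ G.ends e, v ∉ X)}

/-- `X` is strongly closed (w.r.t. the coloring `c` of the edges in `D`): every color on a
boundary edge of `X` is present at every vertex of `X`, and the colors on the boundary edges
are pairwise distinct. -/
def IsStronglyClosedOn (D : Set G.E) (c : G.E → ℕ) (X : Set G.V) : Prop :=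
  (∀ e ∈ G.boundary X ∩ D, ∀ v ∈ X, ∃ f ∈ D, v ∈ G.ends f ∧ c f = c e) ∧
  ∀ e ∈ G.boundary X ∩ D, ∀ f ∈ G.boundary X ∩ D, e ≠ f → c e ≠ c f

end Basic

/-- A subgraph of `G`: a set of vertices together with a set of edges all of whose
endvertices belong to the vertex set. -/
structure Subgraph (G : Multigraph) where
  verts : Set G.V
  edges : Set G.E
  support : ∀ e ∈ edges, ∀ v, v ∈ G.ends e → v ∈ verts

section Sub

variable (G : Multigraph)

/-- The whole graph, as a subgraph of itself. -/
def top : G.Subgraph := ⟨Set.univ, Set.univ, fun _ _ _ _ => Set.mem_univ _⟩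

/-- `H` is a `k`-dense subgraph: it has an odd number of vertices and
`|E(H)| = (|V(H)|-1)·k/2`. -/
def IsDense (k : ℕ) (H : G.Subgraph) : Prop :=
  Odd H.verts.ncard ∧ 2 * H.edges.ncard = (H.verts.ncard - 1) * k

/-- `H` is a `k`-dense subgraph of `G - F` (the graph obtained by deleting the edges of `F`). -/
def IsDenseIn (F : Set G.E) (k : ℕ) (H : G.Subgraph) : Prop :=
  H.edges ∩ F = ∅ ∧ G.IsDense k H

/-- `H` is a maximal `k`-dense subgraph of `G - F`. -/
def IsMaximalDenseIn (F : Set G.E) (k : ℕ) (H : G.Subgraph) : Prop :=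
  G.IsDenseIn F k H ∧
  ∀ H' : G.Subgraph, G.IsDenseIn F k H' → H.verts ⊆ H'.verts → H.edges ⊆ H'.edges →
    H.verts = H'.verts ∧ H.edges = H'.edges

/-- The density Γ(H) of a subgraph `H` of `G`:
`max { 2|E(H')|/(|V(H')|-1) : H' ⊆ H, |V(H')| ≥ 3 odd }` (and `0` if there is no such `H'`,
since in `ℝ` the supremum of the empty set is `0`). -/
noncomputable def densityOf (H : G.Subgraph) : ℝ :=
  sSup {x : ℝ | ∃ H' : G.Subgraph, H'.verts ⊆ H.verts ∧ H'.edges ⊆ H.edges ∧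
    3 ≤ H'.verts.ncard ∧ Odd H'.verts.ncard ∧
    x = 2 * (H'.edges.ncard : ℝ) / ((H'.verts.ncard : ℝ) - 1)}

/-- The density Γ(G). -/
noncomputable def density : ℝ := G.densityOf G.top

/-- `e` is a `k`-critical edge of `G`: `χ'(G-e) = k < χ'(G) = k+1`. -/
def IsCriticalEdge (k : ℕ) (e : G.E) : Prop :=
  G.chromIndexOn {e}ᶜ = k ∧ G.chromIndex = k + 1

/-- Degree of `v` in the subgraph consisting of the edges in `D`. -/
noncomputable def degreeOn (D : Set G.E) (v : G.V) : ℕ := {e : G.E | e ∈ D ∧ v ∈ G.ends e}.ncard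

/-- Maximum degree of the subgraph consisting of the edges in `D`. -/
noncomputable def maxDegreeOn (D : Set G.E) : ℕ := sSup (Set.range (G.degreeOn D))

/-- Multiplicity of the pair `x,y` in the subgraph consisting of the edges in `D`. -/
noncomputable def multOn (D : Set G.E) (x y : G.V) : ℕ :=
  {e : G.E | e ∈ D ∧ G.ends e = s(x, y)}.ncard

/-- Maximum multiplicity of the subgraph consisting of the edges in `D`. -/
noncomputable def maxMultOn (D : Set G.E) : ℕ := sSup {m : ℕ | ∃ x y : G.V, G.multOn D x y = m}

/-- The simple graph underlying the subgraph of `G` with edge set `D`. -/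
def simpleOn (D : Set G.E) : SimpleGraph G.V where
  Adj a b := a ≠ b ∧ ∃ e ∈ D, G.ends e = s(a, b)
  symm := by
    constructor
    rintro a b ⟨hab, e, he, hh⟩
    exact ⟨hab.symm, e, he, hh.trans Sym2.eq_swap⟩
  loopless := by constructor; rintro a ⟨h, -⟩; exact h rfl

/-- The diameter (in `ℕ∞`) of the subgraph with vertex set `S` and edge set `D`:
the greatest distance between a pair of its vertices. -/
noncomputable def diamOn (S : Set G.V) (D : Set G.E) : ℕ∞ :=
  sSup {d : ℕ∞ | ∃ u ∈ S, ∃ v ∈ S, (G.simpleOn D).edist u v = d}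

/-- The distance (in `ℕ∞`) between two edges of `G`: the length of a shortest path connecting
an endvertex of `e` and an endvertex of `f`. -/
noncomputable def edgeDist (e f : G.E) : ℕ∞ :=
  sInf {d : ℕ∞ | ∃ u v : G.V, u ∈ G.ends e ∧ v ∈ G.ends f ∧
    (G.simpleOn Set.univ).edist u v = d}

/-- A matching: a set of edges no two of which share an endvertex. -/
def IsMatching (M : Set G.E) : Prop :=
  ∀ e ∈ M, ∀ f ∈ M, e ≠ f → ∀ v : G.V, v ∈ G.ends e → v ∉ G.ends f

/-- An edge `e ∈ E_G(x,y)` is fully `G`-saturated if `d_G(x) = d_G(y) = Δ(G)` and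
`e_G(x,y) = μ(G)`. -/
def IsFullySaturated (e : G.E) : Prop :=
  ∃ x y : G.V, G.ends e = s(x, y) ∧ G.degree x = G.maxDegree ∧ G.degree y = G.maxDegree ∧
    G.mult x y = G.maxMult

/-- One step along a Kempe `(α,β)`-chain: an edge of `D` colored `α` or `β` joining the
two vertices. -/
def chainStep (D : Set G.E) (c : G.E → ℕ) (α β : ℕ) (a b : G.V) : Prop :=
  ∃ e ∈ D, G.ends e = s(a, b) ∧ (c e = α ∨ c e = β)

/-- `u` and `v` lie on the same `(α,β)`-chain, i.e. `P_u(α,β) = P_v(α,β)`. -/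
def sameChain (D : Set G.E) (c : G.E → ℕ) (α β : ℕ) (u v : G.V) : Prop :=
  Relation.ReflTransGen (G.chainStep D c α β) u v

end Sub

/-- The Goldberg–Seymour theorem (proved by Chen, Jing and Zang), as a hypothesis:
every multigraph `G'` with `χ'(G') ≥ Δ(G')+2` satisfies `χ'(G') = ⌈Γ(G')⌉`. -/
def GoldbergSeymour : Prop :=
  ∀ G' : Multigraph, G'.maxDegree + 2 ≤ G'.chromIndex → (G'.chromIndex : ℤ) = ⌈G'.density⌉

/-- A (general) multi-fan at `x` with respect to the edge `e₀ ∈ E_G(x,y₀)` and the coloring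
`c` of the edges in `D` with palette `{1,…,k}`: a sequence `(x, e₀, y₀, e₁, y₁, …, e_p, y_p)`
of vertices and pairwise distinct edges with `e_i ∈ E_G(x, y_i)` and, for `i ≥ 1`,
`c(e_i)` missing at `y_j` for some `j < i`. -/
structure MultiFan (G : Multigraph) (k : ℕ) (D : Set G.E) (c : G.E → ℕ)
    (x : G.V) (e₀ : G.E) (y₀ : G.V) where
  p : ℕ
  edge : Fin (p + 1) → G.E
  vx : Fin (p + 1) → G.V
  edge_zero : edge 0 = e₀
  vx_zero : vx 0 = y₀
  ends_eq : ∀ i, G.ends (edge i) = s(x, vx i)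
  edge_inj : Function.Injective edge
  fan_cond : ∀ i : Fin (p + 1), i ≠ 0 →
    ∃ j : Fin (p + 1), j < i ∧ c (edge i) ∈ G.missingOn k D c (vx j)

namespace MultiFan

variable {G : Multigraph} {k : ℕ} {D : Set G.E} {c : G.E → ℕ} {x : G.V} {e₀ : G.E} {y₀ : G.V}

/-- The vertex set `V(F)` of a multi-fan. -/
def verts (F : MultiFan G k D c x e₀ y₀) : Set G.V := insert x (Set.range F.vx)

/-- `F` is a subsequence of `F'`. -/
def Subseq (F F' : MultiFan G k D c x e₀ y₀) : Prop :=
  ∃ ι : Fin (F.p + 1) → Fin (F'.p + 1), StrictMono ι ∧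
    ∀ i, F'.edge (ι i) = F.edge i ∧ F'.vx (ι i) = F.vx i

/-- `F` is a maximal multi-fan: no multi-fan contains it as a proper subsequence. -/
def IsMaximal (F : MultiFan G k D c x e₀ y₀) : Prop :=
  ∀ F' : MultiFan G k D c x e₀ y₀, F.Subseq F' → F'.p = F.p

/-- `F` contains no `i`-edge. -/
def NoColor (F : MultiFan G k D c x e₀ y₀) (i : ℕ) : Prop :=
  ∀ j, F.edge j ∈ D → c (F.edge j) ≠ i

/-- `F` is a multi-fan without `i`-edges that is maximal among such. -/
def IsMaximalWithout (F : MultiFan G k D c x e₀ y₀) (i : ℕ) : Prop :=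
  F.NoColor i ∧
  ∀ F' : MultiFan G k D c x e₀ y₀, F'.NoColor i → F.Subseq F' → F'.p = F.p

/-- `e_F(x,z)`: the number of edges of the multi-fan `F` joining `x` and `z`. -/
noncomputable def multAt (F : MultiFan G k D c x e₀ y₀) (z : G.V) : ℕ :=
  Nat.card {j : Fin (F.p + 1) // F.vx j = z}

end MultiFan

end Multigraph

/-!
If some color `α` were missing at two vertices `u ≠ v` of a `k`-dense subgraph `H` with
`|V(H)| = 2t + 1`, then every color class of `φ_H` is a matching inside `V(H)`, hence has at
most `t` edges, and the class of `α` avoids `u` and `v`, hence has at most `t - 1` edges.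
Summing over the `k` colors gives `|E(H)| < kt = |E(H)|`. Strong closedness follows from
elementarity: the color of a boundary edge at `a ∈ V(H)` is missing at `a` in `H`, so it must
be present at every other vertex of `H`, and cannot appear on a second boundary edge.
-/

theorem Set.ncard_eq_sum_ncard_fiber {ι κ : Type*} [Fintype ι] {s : Set ι} {f : ι → κ}
    {t : Finset κ} (h : ∀ x ∈ s, f x ∈ t) : s.ncard = ∑ b ∈ t, {x ∈ s | f x = b}.ncard := by
  classical
  rw [Set.ncard_eq_toFinset_card' s,
    Finset.card_eq_sum_card_fiberwise fun x hx => h x (by simpa using hx)]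
  refine Finset.sum_congr rfl fun b _ => ?_
  rw [Set.ncard_eq_toFinset_card']
  congr 1
  ext x
  simp

namespace Multigraph

variable {G : Multigraph} {k : ℕ} {D : Set G.E} {c : G.E → ℕ}

theorem IsProperColoringOn.mono {D' : Set G.E} (hc : G.IsProperColoringOn k D c)
    (hD' : D' ⊆ D) : G.IsProperColoringOn k D' c :=
  ⟨fun e he => hc.1 e (hD' he), fun e he f hf => hc.2 e (hD' he) f (hD' hf)⟩

theorem IsProperColoringOn.isMatching_colorClass (hc : G.IsProperColoringOn k D c) (β : ℕ) :
    G.IsMatching {e ∈ D | c e = β} :=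
  fun e he f hf hef v hve hvf => hc.2 e he.1 f hf.1 hef ⟨v, hve, hvf⟩ (he.2.trans hf.2.symm)

theorem IsMatching.two_mul_ncard_le {M : Set G.E} {S : Set G.V} (hM : G.IsMatching M)
    (hMS : ∀ e ∈ M, ∀ v ∈ G.ends e, v ∈ S) : 2 * M.ncard ≤ S.ncard := by
  classical
  have hdisj : (M.toFinset : Set G.E).PairwiseDisjoint fun e => (G.ends e).toFinset :=
    fun e he f hf hef => Finset.disjoint_left.2 fun v hve hvf =>
      hM e (by simpa using he) f (by simpa using hf) hef v
        (Sym2.mem_toFinset.1 hve) (Sym2.mem_toFinset.1 hvf)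
  calc 2 * M.ncard = (M.toFinset.biUnion fun e => (G.ends e).toFinset).card := by
        rw [Finset.card_biUnion hdisj, Finset.sum_const_nat fun e _ =>
          Sym2.card_toFinset_of_not_isDiag _ (G.loopless e), Set.ncard_eq_toFinset_card',
          mul_comm]
    _ ≤ S.toFinset.card := Finset.card_le_card fun v hv => by
        obtain ⟨e, he, hve⟩ := Finset.mem_biUnion.1 hv
        simpa using hMS e (by simpa using he) v (Sym2.mem_toFinset.1 hve)
    _ = S.ncard := (Set.ncard_eq_toFinset_card' S).symm

theorem IsDense.isElementaryOn {H : G.Subgraph} {φ : G.E → ℕ} (hH : G.IsDense k H)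
    (hφ : G.IsProperColoringOn k H.edges φ) : G.IsElementaryOn k H.edges φ H.verts := by
  intro u hu v hv huv
  refine Set.eq_empty_of_forall_notMem ?_
  rintro α ⟨⟨hαk, hαu⟩, -, hαv⟩
  obtain ⟨⟨t, ht⟩, hcount⟩ := hH
  have hclass_le : ∀ β, {e ∈ H.edges | φ e = β}.ncard ≤ t := fun β => by
    have := (hφ.isMatching_colorClass β).two_mul_ncard_le fun e he => H.support e he.1
    omega
  have hclass_lt : {e ∈ H.edges | φ e = α}.ncard < t := by
    have huvH : {u, v} ⊆ H.verts := Set.insert_subset hu (Set.singleton_subset_iff.2 hv)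
    have hpair := Set.ncard_le_ncard huvH
    have hmatch := (hφ.isMatching_colorClass α).two_mul_ncard_le (S := H.verts \ {u, v})
      fun e he w hw => ⟨H.support e he.1 w hw, by
        rintro (rfl | rfl)
        exacts [hαu e he.1 hw he.2, hαv e he.1 hw he.2]⟩
    rw [Set.ncard_sdiff huvH, Set.ncard_pair huv] at hmatch
    rw [Set.ncard_pair huv] at hpair
    omega
  have hedges : H.edges.ncard = t * k := by
    rw [ht, Nat.add_sub_cancel] at hcount
    linarith
  have : H.edges.ncard < H.edges.ncard :=
    calc H.edges.ncard = ∑ β ∈ Finset.Icc 1 k, {e ∈ H.edges | φ e = β}.ncard :=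
          Set.ncard_eq_sum_ncard_fiber fun e he => Finset.mem_Icc.2 (hφ.1 e he)
      _ < ∑ _β ∈ Finset.Icc 1 k, t :=
          Finset.sum_lt_sum (fun β _ => hclass_le β) ⟨α, Finset.mem_Icc.2 hαk, hclass_lt⟩
      _ = H.edges.ncard := by simp [hedges, mul_comm]
  exact this.false

theorem mem_missingOn_of_mem_boundary {H : G.Subgraph} {φ : G.E → ℕ}
    (hφ : G.IsProperColoring k φ) {e : G.E} (he : e ∈ G.boundary H.verts) {a : G.V}
    (hae : a ∈ G.ends e) : φ e ∈ G.missingOn k H.edges φ a := by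
  refine ⟨hφ.1 e trivial, fun g hg hag hcol => ?_⟩
  obtain ⟨-, b, hbe, hbH⟩ := he
  have hge : g ≠ e := by
    rintro rfl
    exact hbH (H.support g hg b hbe)
  exact hφ.2 g trivial e trivial hge ⟨a, hag, hae⟩ hcol

theorem IsElementaryOn.isStronglyClosedOn {H : G.Subgraph} {φ : G.E → ℕ}
    (hφ : G.IsProperColoring k φ) (hElem : G.IsElementaryOn k H.edges φ H.verts) :
    G.IsStronglyClosedOn Set.univ φ H.verts := by
  have not_missing_both : ∀ {u v : G.V}, u ∈ H.verts → v ∈ H.verts → u ≠ v →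
      ∀ {α}, α ∈ G.missingOn k H.edges φ u → α ∉ G.missingOn k H.edges φ v :=
    fun hu hv huv _ hαu hαv => (hElem _ hu _ hv huv).subset ⟨hαu, hαv⟩
  constructor
  · rintro e ⟨he, -⟩ v hv
    obtain ⟨a, hae, haH⟩ := he.1
    by_cases hva : v = a
    · exact ⟨e, trivial, hva ▸ hae, rfl⟩
    by_contra! hcon
    exact not_missing_both hv haH hva
      ⟨hφ.1 e trivial, fun g hg hvg => hcon g trivial hvg⟩
      (mem_missingOn_of_mem_boundary hφ he hae)
  · rintro e ⟨he, -⟩ f ⟨hf, -⟩ hef hcol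
    obtain ⟨a, hae, haH⟩ := he.1
    obtain ⟨b, hbf, hbH⟩ := hf.1
    by_cases hab : a = b
    · exact hφ.2 e trivial f trivial hef ⟨a, hae, hab ▸ hbf⟩ hcol
    exact not_missing_both haH hbH hab (mem_missingOn_of_mem_boundary hφ he hae)
      (hcol ▸ mem_missingOn_of_mem_boundary hφ hf hbf)

end Multigraph

theorem dense_subgraph_elementary_strongly_closed_general (G : Multigraph) (k : ℕ)
    (H : G.Subgraph) (hH : G.IsDense k H)
    (φ : G.E → ℕ) (hφ : G.IsProperColoring k φ) :
    G.IsElementaryOn k H.edges φ H.verts ∧ G.IsStronglyClosedOn Set.univ φ H.verts := by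
  have hElem := hH.isElementaryOn (hφ.mono (Set.subset_univ _))
  exact ⟨hElem, hElem.isStronglyClosedOn hφ⟩

/-- **Lemma 2.2 (second part).** If `χ'(G) = k` and `H` is a `k`-dense subgraph of `G`, then
for every `k`-edge-coloring `φ` of `G`, the subgraph `H` is `φ_H`-elementary and strongly
`φ`-closed. -/
theorem dense_subgraph_elementary_strongly_closed (G : Multigraph) (k : ℕ)
    (hk : G.chromIndex = k)
    (H : G.Subgraph) (hH : G.IsDense k H)
    (φ : G.E → ℕ) (hφ : G.IsProperColoring k φ) :
    G.IsElementaryOn k H.edges φ H.verts ∧ G.IsStronglyClosedOn Set.univ φ H.verts :=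
  dense_subgraph_elementary_strongly_closed_general G k H hH φ hφ
end

section
/- Let G be a multigraph with χ'(G) = k+1 ≥ Δ(G)+2, let e be a k-critical edge of G, and let H be the unique maximal k-dense subgraph of G−e containing both endvertices of e. Then for every k-edge-coloring φ of G−e, the subgraph H is φ_H-elementary and strongly φ-closed. -/
/-!
The `k` colors split the edges of `H` into `k` matchings. Since `|V(H)|` is odd, each of them
covers at most `|V(H)| - 1` vertices, and `k`-density forces equality: each color `i` is missing
inside `H` at exactly one vertex `w_i`. Hence distinct vertices of `H` miss distinct colors, and
a boundary edge of color `i` must leave `H` at `w_i`; this supplies the color `i` at `w_i` and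
rules out a second boundary edge of color `i`.
-/

namespace Multigraph

variable {G : Multigraph}

def cover (M : Set G.E) : Set G.V := {v | ∃ f ∈ M, v ∈ G.ends f}

def colorClass (S : Set G.E) (c : G.E → ℕ) (i : ℕ) : Set G.E := {f | f ∈ S ∧ c f = i}

theorem IsMatching.ncard_cover {M : Set G.E} (hM : G.IsMatching M) :
    (G.cover M).ncard = 2 * M.ncard := by
  classical
  have hcover : G.cover M = ↑(M.toFinset.biUnion fun f => (G.ends f).toFinset) := by
    ext v
    simp [cover]
  have hdisj : (M.toFinset : Set G.E).PairwiseDisjoint fun f => (G.ends f).toFinset := by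
    intro f hf g hg hfg
    simp only [Function.onFun, Finset.disjoint_left, Sym2.mem_toFinset]
    exact hM f (by simpa using hf) g (by simpa using hg) hfg
  rw [hcover, Set.ncard_coe_finset, Finset.card_biUnion hdisj,
    Finset.sum_congr rfl fun f _ => Sym2.card_toFinset_of_not_isDiag _ (G.loopless f),
    Finset.sum_const, smul_eq_mul, Set.ncard_eq_toFinset_card', mul_comm]

theorem IsProperColoringOn.isMatching_colorClass_s6 {k : ℕ} {D S : Set G.E} {c : G.E → ℕ}
    (hc : G.IsProperColoringOn k D c) (hS : S ⊆ D) (i : ℕ) :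
    G.IsMatching (colorClass S c i) := by
  rintro f ⟨hfS, rfl⟩ g ⟨hgS, hgc⟩ hfg v hvf hvg
  exact hc.2 f (hS hfS) g (hS hgS) hfg ⟨v, hvf, hvg⟩ hgc.symm

theorem IsProperColoringOn.ncard_eq_sum_colorClass {k : ℕ} {D S : Set G.E} {c : G.E → ℕ}
    (hc : G.IsProperColoringOn k D c) (hS : S ⊆ D) :
    S.ncard = ∑ i ∈ Finset.Icc 1 k, (colorClass S c i).ncard := by
  classical
  rw [Set.ncard_eq_toFinset_card',
    Finset.card_eq_sum_card_fiberwise (t := Finset.Icc 1 k) (f := c) fun f hf => ?_]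
  · refine Finset.sum_congr rfl fun i _ => ?_
    rw [← Set.ncard_coe_finset]
    congr 1
    ext f
    simp [colorClass]
  · simpa using hc.1 f (hS (by simpa using hf))

theorem cover_colorClass_subset (H : G.Subgraph) (c : G.E → ℕ) (i : ℕ) :
    G.cover (colorClass H.edges c i) ⊆ H.verts := by
  rintro v ⟨f, hf, hv⟩
  exact H.support f hf.1 v hv

theorem mem_missingOn_iff {k : ℕ} {D : Set G.E} {c : G.E → ℕ} {v : G.V} {i : ℕ} :
    i ∈ G.missingOn k D c v ↔ i ∈ Set.Icc 1 k ∧ v ∉ G.cover (colorClass D c i) := by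
  simp only [missingOn, cover, colorClass, Set.mem_ofPred_eq, not_exists, not_and, and_imp]
  exact and_congr_right fun _ => forall₂_congr fun _ _ => forall_comm

theorem IsProperColoringOn.notMem_cover_colorClass_of_mem_boundary {k : ℕ} {D : Set G.E}
    {c : G.E → ℕ} {H : G.Subgraph} (hc : G.IsProperColoringOn k D c) (hHD : H.edges ⊆ D)
    {f : G.E} (hf : f ∈ G.boundary H.verts) (hfD : f ∈ D) {u : G.V} (hu : u ∈ G.ends f) :
    u ∉ G.cover (colorClass H.edges c (c f)) := by
  rintro ⟨g, ⟨hg, hgc⟩, hug⟩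
  have hfg : g ≠ f := by
    rintro rfl
    obtain ⟨w, hw, hwH⟩ := hf.2
    exact hwH (H.support g hg w hw)
  exact hc.2 g (hHD hg) f hfD hfg ⟨u, hug, hu⟩ hgc

theorem IsDenseIn.edges_subset_compl {F : Set G.E} {k : ℕ} {H : G.Subgraph}
    (hH : G.IsDenseIn F k H) : H.edges ⊆ Fᶜ :=
  Set.subset_compl_iff_disjoint_right.2 (Set.disjoint_iff_inter_eq_empty.2 hH.1)

namespace IsDense

variable {k : ℕ} {D : Set G.E} {c : G.E → ℕ} {H : G.Subgraph}

theorem two_mul_ncard_colorClass_add_one (hH : G.IsDense k H) (hHD : H.edges ⊆ D)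
    (hc : G.IsProperColoringOn k D c) {i : ℕ} (hi : i ∈ Set.Icc 1 k) :
    2 * (colorClass H.edges c i).ncard + 1 = H.verts.ncard := by
  obtain ⟨⟨m, hm⟩, hE⟩ := hH
  have hle : ∀ j, (colorClass H.edges c j).ncard ≤ m := fun j => by
    have := Set.ncard_le_ncard (cover_colorClass_subset H c j)
    rw [(hc.isMatching_colorClass_s6 hHD j).ncard_cover] at this
    omega
  have hsum : ∑ j ∈ Finset.Icc 1 k, (colorClass H.edges c j).ncard =
      ∑ _j ∈ Finset.Icc 1 k, m := by
    rw [← hc.ncard_eq_sum_colorClass hHD, Finset.sum_const, Nat.card_Icc, smul_eq_mul,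
      Nat.add_sub_cancel, mul_comm k]
    rw [hm, Nat.add_sub_cancel, mul_assoc] at hE
    omega
  have := (Finset.sum_eq_sum_iff_of_le fun j _ => hle j).1 hsum i (Finset.mem_Icc.2 hi)
  omega

theorem exists_diff_cover_colorClass_eq_singleton (hH : G.IsDense k H) (hHD : H.edges ⊆ D)
    (hc : G.IsProperColoringOn k D c) {i : ℕ} (hi : i ∈ Set.Icc 1 k) :
    ∃ w, H.verts \ G.cover (colorClass H.edges c i) = {w} := by
  rw [← Set.ncard_eq_one, Set.ncard_sdiff (cover_colorClass_subset H c i),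
    (hc.isMatching_colorClass_s6 hHD i).ncard_cover,
    ← hH.two_mul_ncard_colorClass_add_one hHD hc hi]
  omega

theorem isElementaryOn_s6 (hH : G.IsDense k H) (hHD : H.edges ⊆ D)
    (hc : G.IsProperColoringOn k D c) : G.IsElementaryOn k H.edges c H.verts := by
  intro u hu v hv huv
  refine Set.eq_empty_of_forall_notMem fun i ⟨hiu, hiv⟩ => huv ?_
  rw [mem_missingOn_iff] at hiu hiv
  obtain ⟨w, hw⟩ := hH.exists_diff_cover_colorClass_eq_singleton hHD hc hiu.1
  have hu' : u ∈ H.verts \ G.cover (colorClass H.edges c i) := ⟨hu, hiu.2⟩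
  have hv' : v ∈ H.verts \ G.cover (colorClass H.edges c i) := ⟨hv, hiv.2⟩
  rw [hw] at hu' hv'
  exact hu'.trans hv'.symm

theorem isStronglyClosedOn (hH : G.IsDense k H) (hHD : H.edges ⊆ D)
    (hc : G.IsProperColoringOn k D c) : G.IsStronglyClosedOn D c H.verts := by
  have hend : ∀ f ∈ G.boundary H.verts ∩ D,
      ∃ u ∈ G.ends f, H.verts \ G.cover (colorClass H.edges c (c f)) = {u} := by
    rintro f ⟨hfb, hfD⟩
    obtain ⟨u, hu, huH⟩ := hfb.1
    obtain ⟨w, hw⟩ := hH.exists_diff_cover_colorClass_eq_singleton hHD hc (hc.1 f hfD)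
    have hu' : u ∈ H.verts \ G.cover (colorClass H.edges c (c f)) :=
      ⟨huH, hc.notMem_cover_colorClass_of_mem_boundary hHD hfb hfD hu⟩
    rw [hw] at hu'
    exact ⟨u, hu, hu' ▸ hw⟩
  constructor
  · intro f hf v hv
    obtain ⟨u, hu, hU⟩ := hend f hf
    by_cases hvC : v ∈ G.cover (colorClass H.edges c (c f))
    · obtain ⟨g, ⟨hg, hgc⟩, hvg⟩ := hvC
      exact ⟨g, hHD hg, hvg, hgc⟩
    · have hvU : v ∈ H.verts \ G.cover (colorClass H.edges c (c f)) := ⟨hv, hvC⟩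
      rw [hU] at hvU
      exact ⟨f, hf.2, hvU ▸ hu, rfl⟩
  · intro f hf g hg hfg hcfg
    obtain ⟨u, hu, hU⟩ := hend f hf
    obtain ⟨u', hu', hU'⟩ := hend g hg
    rw [← hcfg, hU, Set.singleton_eq_singleton_iff] at hU'
    exact hc.2 f hf.2 g hg.2 hfg ⟨u, hu, hU' ▸ hu'⟩ hcfg

end IsDense

end Multigraph

theorem maximal_dense_elementary_strongly_closed_general
    (G : Multigraph) (k : ℕ)
    (e : G.E)
    (H : G.Subgraph) (hH : G.IsMaximalDenseIn {e} k H)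
    (φ : G.E → ℕ) (hφ : G.IsProperColoringOn k {e}ᶜ φ) :
    G.IsElementaryOn k H.edges φ H.verts ∧ G.IsStronglyClosedOn {e}ᶜ φ H.verts := by
  have hHe : H.edges ⊆ {e}ᶜ := hH.1.edges_subset_compl
  exact ⟨hH.1.2.isElementaryOn_s6 hHe hφ, hH.1.2.isStronglyClosedOn hHe hφ⟩

/-- **Lemma 2.4(b).** (Assuming the Goldberg–Seymour theorem.) Let `χ'(G) = k+1 ≥ Δ(G)+2`,
let `e` be a `k`-critical edge of `G`, and let `H` be the (unique) maximal `k`-dense subgraph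
of `G-e` containing both endvertices of `e`. Then for every `k`-edge-coloring `φ` of `G-e`,
the subgraph `H` is `φ_H`-elementary and strongly `φ`-closed. -/
theorem maximal_dense_elementary_strongly_closed (hGS : Multigraph.GoldbergSeymour)
    (G : Multigraph) (k : ℕ)
    (hχ : G.chromIndex = k + 1) (hΔ : G.maxDegree + 2 ≤ k + 1)
    (e : G.E) (he : G.IsCriticalEdge k e)
    (H : G.Subgraph) (hH : G.IsMaximalDenseIn {e} k H)
    (hVe : ∀ v, v ∈ G.ends e → v ∈ H.verts)
    (φ : G.E → ℕ) (hφ : G.IsProperColoringOn k {e}ᶜ φ) :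
    G.IsElementaryOn k H.edges φ H.verts ∧ G.IsStronglyClosedOn {e}ᶜ φ H.verts :=
  maximal_dense_elementary_strongly_closed_general G k e H hH φ hφ
end

section
/- Let G be a multigraph with maximum degree Δ and maximum multiplicity μ ≥ 2, let e ∈ E_G(x,y), and let k = Δ+μ−1. Assume χ'(G) = k, φ is a k-edge-coloring of G, and V(G) is φ-elementary. (1) If F' is a maximal multi-fan at x with respect to e and φ in G, and x has no Δ-neighbor in G from V(F'), then d_G(z) = Δ−1 for all z ∈ V(F')∖{x} and every edge of F' is colored by a color missing at some vertex of V(F'). (2) Moreover, for i ∈ [k] with φ(e) ∉ φ̄(V(F')), if F' is maximal without any i-edge and F' contains no Δ-vertex of G in V(F')∖{x}, then there exists a vertex z* ∈ V(F')∖{x} with i ∈ φ̄(z*) and d_G(z*) = Δ−1. -/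
/-! If every leaf of a multi-fan `F` at `x` has degree less than `Δ = k + 1 - μ`, each leaf misses
at least `μ` colors, and since `V(G)` is elementary these sets are disjoint; as each leaf carries at
most `μ` edges of `F`, the leaves miss at least `p + 1 = |E(F)|` colors together. Maximality of `F`
(without `i`-edges) puts every missing color of a leaf (other than `i`) on an edge of `F`, so the
count is tight: every leaf misses exactly `μ` colors, i.e. has degree `Δ - 1`, the missing colors
are exactly the colors of `F`, and in case (2) the color `i` is among them. -/

namespace Multigraph

open Finset Classical

variable {G : Multigraph} {k : ℕ}

lemma degree_le_maxDegree (v : G.V) : G.degree v ≤ G.maxDegree :=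
  le_csSup (Set.finite_range _).bddAbove ⟨v, rfl⟩

lemma mult_le_maxMult (u v : G.V) : G.mult u v ≤ G.maxMult := by
  refine le_csSup ((Set.finite_range fun p : G.V × G.V => G.mult p.1 p.2).subset ?_).bddAbove
    ⟨u, v, rfl⟩
  rintro _ ⟨a, b, rfl⟩
  exact ⟨(a, b), rfl⟩

noncomputable def incidentEdges (v : G.V) : Finset G.E := {e | v ∈ G.ends e}

lemma degree_eq_card_incidentEdges (v : G.V) : G.degree v = #(G.incidentEdges v) := by
  rw [degree, incidentEdges, ← Set.ncard_coe_finset, coe_filter]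
  simp

noncomputable def missingFinset (k : ℕ) (c : G.E → ℕ) (v : G.V) : Finset ℕ :=
  Icc 1 k \ (G.incidentEdges v).image c

lemma mem_missingFinset {c : G.E → ℕ} {v : G.V} {i : ℕ} :
    i ∈ G.missingFinset k c v ↔ i ∈ G.missingOn k Set.univ c v := by
  simp only [missingFinset, missingOn, incidentEdges, mem_sdiff, mem_Icc, mem_image, mem_filter,
    mem_univ, true_and, not_exists, not_and, Set.mem_ofPred_eq, Set.mem_Icc, Set.mem_univ,
    forall_const]

lemma IsProperColoring.degree_add_card_missingFinset {φ : G.E → ℕ}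
    (hφ : G.IsProperColoring k φ) (v : G.V) : G.degree v + #(G.missingFinset k φ v) = k := by
  have hinj : Set.InjOn φ (G.incidentEdges v) := fun e he f hf hef => by
    by_contra hne
    exact hφ.2 e trivial f trivial hne ⟨v, by simpa [incidentEdges] using he,
      by simpa [incidentEdges] using hf⟩ hef
  have hsub : (G.incidentEdges v).image φ ⊆ Icc 1 k := by
    simpa [image_subset_iff] using fun e _ => hφ.1 e trivial
  rw [degree_eq_card_incidentEdges, ← card_image_of_injOn hinj, missingFinset, add_comm,
    card_sdiff_add_card_eq_card hsub, Nat.card_Icc, Nat.add_sub_cancel]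

lemma IsProperColoring.maxMult_le_card_missingFinset {φ : G.E → ℕ}
    (hk : k + 1 = G.maxDegree + G.maxMult) (hφ : G.IsProperColoring k φ) {v : G.V}
    (hv : G.degree v < G.maxDegree) : G.maxMult ≤ #(G.missingFinset k φ v) := by
  have := hφ.degree_add_card_missingFinset v
  omega

lemma IsElementaryOn.disjoint_missingFinset {φ : G.E → ℕ}
    (helem : G.IsElementaryOn k Set.univ φ Set.univ) {u v : G.V} (huv : u ≠ v) :
    Disjoint (G.missingFinset k φ u) (G.missingFinset k φ v) :=
  disjoint_left.2 fun _ hu hv =>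
    (helem u trivial v trivial huv).subset ⟨mem_missingFinset.1 hu, mem_missingFinset.1 hv⟩

namespace MultiFan

variable {D : Set G.E} {c : G.E → ℕ} {x : G.V} {e₀ : G.E} {y₀ : G.V}

lemma vx_ne_center (F : MultiFan G k D c x e₀ y₀) (j : Fin (F.p + 1)) : F.vx j ≠ x := by
  intro h
  have := G.loopless (F.edge j)
  rw [F.ends_eq j, h] at this
  exact this rfl

noncomputable def leaves (F : MultiFan G k D c x e₀ y₀) : Finset G.V := univ.image F.vx

noncomputable def colors (F : MultiFan G k D c x e₀ y₀) : Finset ℕ :=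
  univ.image fun j => c (F.edge j)

def snoc (F : MultiFan G k D c x e₀ y₀) (f : G.E) (z : G.V) (hf : ∀ j, F.edge j ≠ f)
    (hz : G.ends f = s(x, z)) (j₀ : Fin (F.p + 1)) (hcol : c f ∈ G.missingOn k D c (F.vx j₀)) :
    MultiFan G k D c x e₀ y₀ where
  p := F.p + 1
  edge := Fin.snoc F.edge f
  vx := Fin.snoc F.vx z
  edge_zero := by rw [← Fin.castSucc_zero, Fin.snoc_castSucc, F.edge_zero]
  vx_zero := by rw [← Fin.castSucc_zero, Fin.snoc_castSucc, F.vx_zero]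
  ends_eq := Fin.lastCases (by simpa using hz) fun i => by simpa using F.ends_eq i
  edge_inj := by
    refine Fin.lastCases (Fin.lastCases (fun _ => rfl) fun b h => ?_) fun a => Fin.lastCases
      (fun h => ?_) fun b h => ?_
    · exact absurd (by simpa using h.symm) (hf b)
    · exact absurd (by simpa using h) (hf a)
    · exact congrArg _ (F.edge_inj (by simpa using h))
  fan_cond := Fin.lastCases
    (fun _ => ⟨j₀.castSucc, Fin.castSucc_lt_last j₀, by simpa using hcol⟩) fun i hi => by
      obtain ⟨j, hji, hj⟩ := F.fan_cond i (by rintro rfl; exact hi rfl)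
      exact ⟨j.castSucc, Fin.castSucc_lt_castSucc_iff.2 hji, by simpa using hj⟩

lemma subseq_snoc (F : MultiFan G k D c x e₀ y₀) (f : G.E) (z : G.V) (hf : ∀ j, F.edge j ≠ f)
    (hz : G.ends f = s(x, z)) (j₀ : Fin (F.p + 1)) (hcol : c f ∈ G.missingOn k D c (F.vx j₀)) :
    F.Subseq (F.snoc f z hf hz j₀ hcol) :=
  ⟨Fin.castSucc, Fin.strictMono_castSucc, fun i => by simp [snoc]⟩

lemma colors_snoc (F : MultiFan G k D c x e₀ y₀) (f : G.E) (z : G.V) (hf : ∀ j, F.edge j ≠ f)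
    (hz : G.ends f = s(x, z)) (j₀ : Fin (F.p + 1)) (hcol : c f ∈ G.missingOn k D c (F.vx j₀)) :
    (F.snoc f z hf hz j₀ hcol).colors = insert (c f) F.colors := by
  ext α
  simp only [colors, mem_insert, mem_image, mem_univ, true_and]
  rw [Fin.exists_fin_succ']
  simp [snoc, or_comm, eq_comm]

lemma exists_snoc_of_mem_missingOn (F : MultiFan G k D c x e₀ y₀) {α : ℕ}
    {j₀ : Fin (F.p + 1)} (hα : α ∈ G.missingOn k D c (F.vx j₀))
    (hαx : α ∉ G.missingOn k D c x) (hnew : α ∉ F.colors) :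
    ∃ F' : MultiFan G k D c x e₀ y₀, F.Subseq F' ∧ F'.p = F.p + 1 ∧
      F'.colors = insert α F.colors := by
  obtain ⟨f, -, hxf, rfl⟩ : ∃ f ∈ D, x ∈ G.ends f ∧ c f = α := by
    by_contra! h
    exact hαx ⟨hα.1, h⟩
  obtain ⟨z, hz⟩ := Sym2.mem_iff_exists.1 hxf
  have hf : ∀ j, F.edge j ≠ f := fun j hj =>
    hnew (mem_image.2 ⟨j, mem_univ _, by rw [hj]⟩)
  exact ⟨_, F.subseq_snoc f z hf hz j₀ hα, rfl, F.colors_snoc f z hf hz j₀ hα⟩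

lemma succ_p_le_card_leaves_mul_maxMult (F : MultiFan G k D c x e₀ y₀) :
    F.p + 1 ≤ #F.leaves * G.maxMult := by
  rw [mul_comm]
  have := card_le_mul_card_image (f := F.vx) univ G.maxMult fun z _ => by
    refine le_trans ?_ (mult_le_maxMult x z)
    rw [mult, Set.ncard_eq_toFinset_card']
    refine card_le_card_of_injOn F.edge (fun j hj => ?_) F.edge_inj.injOn
    simp_all [F.ends_eq j]
  simpa [leaves] using this

section Coloring

variable {φ : G.E → ℕ}

noncomputable def missingColors (F : MultiFan G k Set.univ φ x e₀ y₀) : Finset ℕ :=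
  F.leaves.biUnion (G.missingFinset k φ)

lemma mem_missingColors (F : MultiFan G k Set.univ φ x e₀ y₀) {α : ℕ} :
    α ∈ F.missingColors ↔ ∃ j, α ∈ G.missingOn k Set.univ φ (F.vx j) := by
  simp [missingColors, leaves, mem_missingFinset]

lemma card_colors (hφ : G.IsProperColoring k φ) (F : MultiFan G k Set.univ φ x e₀ y₀) :
    #F.colors = F.p + 1 := by
  have hx : ∀ j, x ∈ G.ends (F.edge j) := fun j => by simp [F.ends_eq j]
  rw [colors, card_image_of_injective, card_univ, Fintype.card_fin]
  intro a b hab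
  by_contra hne
  exact hφ.2 _ trivial _ trivial (F.edge_inj.ne hne) ⟨x, hx a, hx b⟩ hab

lemma card_missingColors (helem : G.IsElementaryOn k Set.univ φ Set.univ)
    (F : MultiFan G k Set.univ φ x e₀ y₀) :
    #F.missingColors = ∑ z ∈ F.leaves, #(G.missingFinset k φ z) :=
  card_biUnion fun _ _ _ _ huv => helem.disjoint_missingFinset huv

lemma maxMult_le_card_missingFinset_of_mem_leaves (hk : k + 1 = G.maxDegree + G.maxMult)
    (hφ : G.IsProperColoring k φ) {F : MultiFan G k Set.univ φ x e₀ y₀}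
    (hdeg : ∀ j, G.degree (F.vx j) < G.maxDegree) {z : G.V} (hz : z ∈ F.leaves) :
    G.maxMult ≤ #(G.missingFinset k φ z) := by
  obtain ⟨j, -, rfl⟩ := mem_image.1 hz
  exact hφ.maxMult_le_card_missingFinset hk (hdeg j)

lemma card_leaves_mul_maxMult_le_card_missingColors (hk : k + 1 = G.maxDegree + G.maxMult)
    (hφ : G.IsProperColoring k φ) (helem : G.IsElementaryOn k Set.univ φ Set.univ)
    {F : MultiFan G k Set.univ φ x e₀ y₀} (hdeg : ∀ j, G.degree (F.vx j) < G.maxDegree) :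
    #F.leaves * G.maxMult ≤ #F.missingColors := by
  rw [card_missingColors helem, ← smul_eq_mul, ← sum_const]
  exact sum_le_sum fun _ => maxMult_le_card_missingFinset_of_mem_leaves hk hφ hdeg

lemma succ_p_le_card_missingColors (hk : k + 1 = G.maxDegree + G.maxMult)
    (hφ : G.IsProperColoring k φ) (helem : G.IsElementaryOn k Set.univ φ Set.univ)
    {F : MultiFan G k Set.univ φ x e₀ y₀} (hdeg : ∀ j, G.degree (F.vx j) < G.maxDegree) :
    F.p + 1 ≤ #F.missingColors :=
  F.succ_p_le_card_leaves_mul_maxMult.trans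
    (card_leaves_mul_maxMult_le_card_missingColors hk hφ helem hdeg)

/-- When the leaves miss at most `p + 1` colors, `succ_p_le_card_missingColors` is tight, so
every leaf misses exactly `μ` colors. -/
lemma degree_vx_eq_of_card_missingColors_le (hk : k + 1 = G.maxDegree + G.maxMult)
    (hφ : G.IsProperColoring k φ) (helem : G.IsElementaryOn k Set.univ φ Set.univ)
    {F : MultiFan G k Set.univ φ x e₀ y₀} (hdeg : ∀ j, G.degree (F.vx j) < G.maxDegree)
    (hU : #F.missingColors ≤ F.p + 1) (j : Fin (F.p + 1)) :
    G.degree (F.vx j) = G.maxDegree - 1 := by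
  have hsum : ∑ _z ∈ F.leaves, G.maxMult = ∑ z ∈ F.leaves, #(G.missingFinset k φ z) := by
    have := F.succ_p_le_card_leaves_mul_maxMult
    have := card_leaves_mul_maxMult_le_card_missingColors hk hφ helem hdeg
    rw [sum_const, smul_eq_mul, ← card_missingColors helem]
    omega
  rw [sum_eq_sum_iff_of_le fun _ => maxMult_le_card_missingFinset_of_mem_leaves hk hφ hdeg]
    at hsum
  have := hsum (F.vx j) (mem_image_of_mem _ (mem_univ j))
  have := hφ.degree_add_card_missingFinset (F.vx j)
  omega

lemma notMem_missingOn_center (helem : G.IsElementaryOn k Set.univ φ Set.univ)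
    (F : MultiFan G k Set.univ φ x e₀ y₀) {α : ℕ} {j : Fin (F.p + 1)}
    (hα : α ∈ G.missingOn k Set.univ φ (F.vx j)) : α ∉ G.missingOn k Set.univ φ x :=
  fun hαx => (helem _ trivial x trivial (F.vx_ne_center j)).subset ⟨hα, hαx⟩

lemma missingColors_subset_colors (helem : G.IsElementaryOn k Set.univ φ Set.univ)
    {F : MultiFan G k Set.univ φ x e₀ y₀} (hmax : F.IsMaximal) : F.missingColors ⊆ F.colors := by
  intro α hα
  obtain ⟨j, hαj⟩ := F.mem_missingColors.1 hα
  by_contra hnew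
  obtain ⟨F', hsub, hp, -⟩ :=
    F.exists_snoc_of_mem_missingOn hαj (F.notMem_missingOn_center helem hαj) hnew
  have := hmax F' hsub
  omega

lemma missingColors_erase_subset_colors (helem : G.IsElementaryOn k Set.univ φ Set.univ)
    {F : MultiFan G k Set.univ φ x e₀ y₀} {i : ℕ} (hmax : F.IsMaximalWithout i) :
    F.missingColors.erase i ⊆ F.colors := by
  intro α hα
  obtain ⟨hαi, hα⟩ := mem_erase.1 hα
  obtain ⟨j, hαj⟩ := F.mem_missingColors.1 hα
  by_contra hnew
  obtain ⟨F', hsub, hp, hcol⟩ :=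
    F.exists_snoc_of_mem_missingOn hαj (F.notMem_missingOn_center helem hαj) hnew
  have hi : F'.NoColor i := fun j' _ hj' => by
    have : φ (F'.edge j') ∈ insert α F.colors := hcol ▸ mem_image_of_mem _ (mem_univ j')
    rcases mem_insert.1 this with h | h
    · exact hαi (h ▸ hj')
    · obtain ⟨j, -, hj⟩ := mem_image.1 h
      exact hmax.1 j trivial (hj.trans hj')
  have := hmax.2 F' hi hsub
  omega

lemma missingColors_eq_colors_of_isMaximal (hk : k + 1 = G.maxDegree + G.maxMult)
    (hφ : G.IsProperColoring k φ) (helem : G.IsElementaryOn k Set.univ φ Set.univ)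
    {F : MultiFan G k Set.univ φ x e₀ y₀} (hdeg : ∀ j, G.degree (F.vx j) < G.maxDegree)
    (hmax : F.IsMaximal) : F.missingColors = F.colors :=
  eq_of_subset_of_card_le (missingColors_subset_colors helem hmax)
    (card_colors hφ F ▸ succ_p_le_card_missingColors hk hφ helem hdeg)

lemma mem_missingColors_and_card_le_of_isMaximalWithout (hk : k + 1 = G.maxDegree + G.maxMult)
    (hφ : G.IsProperColoring k φ) (helem : G.IsElementaryOn k Set.univ φ Set.univ)
    {F : MultiFan G k Set.univ φ x e₀ y₀} (hdeg : ∀ j, G.degree (F.vx j) < G.maxDegree)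
    {i : ℕ} (hmax : F.IsMaximalWithout i) (he₀ : φ e₀ ∉ F.missingColors) :
    i ∈ F.missingColors ∧ #F.missingColors ≤ F.p + 1 := by
  have he₀F : φ e₀ ∈ F.colors := mem_image.2 ⟨0, mem_univ _, by rw [F.edge_zero]⟩
  have hErase : #(F.missingColors.erase i) ≤ F.p := by
    have := card_le_card (subset_erase.2 ⟨missingColors_erase_subset_colors helem hmax,
      fun h => he₀ (mem_of_mem_erase h)⟩)
    rwa [card_erase_of_mem he₀F, card_colors hφ F] at this
  have hlow := succ_p_le_card_missingColors hk hφ helem hdeg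
  have hiU : i ∈ F.missingColors := by
    by_contra hi
    rw [erase_eq_of_notMem hi] at hErase
    omega
  have := pred_card_le_card_erase (s := F.missingColors) (a := i)
  exact ⟨hiU, by omega⟩

end Coloring

end MultiFan

end Multigraph

open Multigraph Multigraph.MultiFan Finset

theorem multifan_fully_colored_general (G : Multigraph) (k : ℕ)
    (hk : k + 1 = G.maxDegree + G.maxMult)
    (x y : G.V) (e₀ : G.E)
    (φ : G.E → ℕ) (hφ : G.IsProperColoring k φ)
    (helem : G.IsElementaryOn k Set.univ φ Set.univ) :
    (∀ F' : Multigraph.MultiFan G k Set.univ φ x e₀ y, F'.IsMaximal →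
      (∀ z ∈ F'.verts, (∃ f : G.E, G.ends f = s(x, z)) → G.degree z ≠ G.maxDegree) →
      (∀ z ∈ F'.verts, z ≠ x → G.degree z = G.maxDegree - 1) ∧
      (∀ j, ∃ z ∈ F'.verts, φ (F'.edge j) ∈ G.missingOn k Set.univ φ z)) ∧
    (∀ F' : Multigraph.MultiFan G k Set.univ φ x e₀ y, ∀ i ∈ Set.Icc 1 k,
      φ e₀ ∉ (⋃ z ∈ F'.verts, G.missingOn k Set.univ φ z) →
      F'.IsMaximalWithout i →
      (∀ z ∈ F'.verts, z ≠ x → G.degree z ≠ G.maxDegree) →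
      ∃ z' : G.V, z' ∈ F'.verts ∧ z' ≠ x ∧ i ∈ G.missingOn k Set.univ φ z' ∧
        G.degree z' = G.maxDegree - 1) := by
  have hleaf : ∀ F : MultiFan G k Set.univ φ x e₀ y, ∀ j, F.vx j ∈ F.verts :=
    fun F j => Set.mem_insert_of_mem _ ⟨j, rfl⟩
  constructor
  · intro F hmax hnb
    have hdeg j := (degree_le_maxDegree _).lt_of_ne (hnb _ (hleaf F j) ⟨_, F.ends_eq j⟩)
    have heq := missingColors_eq_colors_of_isMaximal hk hφ helem hdeg hmax
    have hU : #F.missingColors ≤ F.p + 1 := (heq ▸ card_colors hφ F).le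
    refine ⟨?_, fun j => ?_⟩
    · rintro z (rfl | ⟨j, rfl⟩) hz
      exacts [absurd rfl hz, degree_vx_eq_of_card_missingColors_le hk hφ helem hdeg hU j]
    · have hj : φ (F.edge j) ∈ F.missingColors := heq ▸ mem_image_of_mem _ (mem_univ j)
      obtain ⟨j', hj'⟩ := F.mem_missingColors.1 hj
      exact ⟨_, hleaf F j', hj'⟩
  · intro F i _ he₀ hmax hnoΔ
    have hdeg j := (degree_le_maxDegree _).lt_of_ne (hnoΔ _ (hleaf F j) (F.vx_ne_center j))
    have he₀U : φ e₀ ∉ F.missingColors := fun h =>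
      have ⟨j, hj⟩ := F.mem_missingColors.1 h
      he₀ (Set.mem_biUnion (hleaf F j) hj)
    obtain ⟨hiU, hU⟩ := mem_missingColors_and_card_le_of_isMaximalWithout hk hφ helem hdeg hmax he₀U
    obtain ⟨j, hj⟩ := F.mem_missingColors.1 hiU
    exact ⟨_, hleaf F j, F.vx_ne_center j, hj,
      degree_vx_eq_of_card_missingColors_le hk hφ helem hdeg hU j⟩

/-- **Lemma 3.2(d).** Let `G` have maximum degree `Δ`, maximum multiplicity `μ ≥ 2`, let
`k = Δ+μ-1`, assume `χ'(G) = k`, `φ` is a `k`-edge-coloring of `G`, `V(G)` is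
`φ`-elementary, and `e ∈ E_G(x,y)`.
(1) If `F'` is a maximal multi-fan at `x` with respect to `e` and `φ` in `G` and `x` has no
`Δ`-neighbor in `G` from `V(F')`, then `d_G(z) = Δ-1` for all `z ∈ V(F')∖{x}` and every edge
of `F'` is colored by a color missing at some vertex of `V(F')`.
(2) Moreover, for `i ∈ [k]` with `φ(e) ∉ φ̄(V(F'))`, if `F'` is maximal without any `i`-edge
and contains no `Δ`-vertex of `G` in `V(F')∖{x}`, then there is `z* ∈ V(F')∖{x}` with
`i ∈ φ̄(z*)` and `d_G(z*) = Δ-1`. -/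
theorem multifan_fully_colored (G : Multigraph) (k : ℕ)
    (hμ : 2 ≤ G.maxMult) (hk : k + 1 = G.maxDegree + G.maxMult)
    (hχ : G.chromIndex = k)
    (x y : G.V) (e₀ : G.E) (hends : G.ends e₀ = s(x, y))
    (φ : G.E → ℕ) (hφ : G.IsProperColoring k φ)
    (helem : G.IsElementaryOn k Set.univ φ Set.univ) :
    (∀ F' : Multigraph.MultiFan G k Set.univ φ x e₀ y, F'.IsMaximal →
      (∀ z ∈ F'.verts, (∃ f : G.E, G.ends f = s(x, z)) → G.degree z ≠ G.maxDegree) →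
      (∀ z ∈ F'.verts, z ≠ x → G.degree z = G.maxDegree - 1) ∧
      (∀ j, ∃ z ∈ F'.verts, φ (F'.edge j) ∈ G.missingOn k Set.univ φ z)) ∧
    (∀ F' : Multigraph.MultiFan G k Set.univ φ x e₀ y, ∀ i ∈ Set.Icc 1 k,
      φ e₀ ∉ (⋃ z ∈ F'.verts, G.missingOn k Set.univ φ z) →
      F'.IsMaximalWithout i →
      (∀ z ∈ F'.verts, z ≠ x → G.degree z ≠ G.maxDegree) →
      ∃ z' : G.V, z' ∈ F'.verts ∧ z' ≠ x ∧ i ∈ G.missingOn k Set.univ φ z' ∧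
        G.degree z' = G.maxDegree - 1) :=
  multifan_fully_colored_general G k hk x y e₀ φ hφ helem
end
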